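/- Let {T(v)} be a tree representation of a finite simple graph G, and let v be a vertex maximizing the depth d(𝐯) of the root of its subtree. If u₁ and u₂ are vertices in N[v] and T(u₂) overshadows T(u₁), then N[u₁] ⊆ N[u₂]. -/

import Mathlib

/-- A host tree: a finite tree (connected acyclic simple graph on a nonempty
finite node set) with a distinguished root and positive real edge weights. -/
structure HostTree where
  V : Type
  [fintypeV : Fintype V]
  [nonemptyV : Nonempty V]
  G : SimpleGraph V
  isTree : G.IsTree
  root : V
  w : V → V → ℝ
  w_symm : ∀ x y : V, w x y = w y x
  w_pos : ∀ x y : V, G.Adj x y → 0 < w x y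

attribute [instance] HostTree.fintypeV HostTree.nonemptyV

/-- The unique path in the host tree from the root to a node. -/
noncomputable def HostTree.rootPath (T : HostTree) (x : T.V) : T.G.Walk T.root x :=
  (T.isTree.existsUnique_path T.root x).choose

/-- The depth of a node: the sum of the weights of the edges on the unique
path from the root to the node. -/
noncomputable def HostTree.depth (T : HostTree) (x : T.V) : ℝ :=
  ((T.rootPath x).darts.map (fun d => T.w d.toProd.1 d.toProd.2)).sum

/-- A subtree of the host tree: a nonempty set of nodes inducing a connected
subgraph. -/
def HostTree.IsSubtree (T : HostTree) (S : Set T.V) : Prop :=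
  S.Nonempty ∧ (T.G.induce S).Connected

/-- `S₁` overshadows `S₂`: every node of `S₂ \ S₁` has strictly greater depth
than every node of `S₂ ∩ S₁`. -/
def HostTree.Overshadows (T : HostTree) (S₁ S₂ : Set T.V) : Prop :=
  ∀ x ∈ S₂ \ S₁, ∀ y ∈ S₂ ∩ S₁, T.depth y < T.depth x

/-- Two subtrees are compatible if one overshadows the other. -/
def HostTree.CompatiblePair (T : HostTree) (S₁ S₂ : Set T.V) : Prop :=
  T.Overshadows S₁ S₂ ∨ T.Overshadows S₂ S₁

/-- `x` is the root of the subtree `S`: a node of `S` of minimum depth. -/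
def HostTree.IsSubtreeRoot (T : HostTree) (S : Set T.V) (x : T.V) : Prop :=
  x ∈ S ∧ ∀ y ∈ S, T.depth x ≤ T.depth y

/-- The closed neighbourhood `N[v]` of a vertex. -/
def closedNbhd {α : Type*} (G : SimpleGraph α) (v : α) : Set α :=
  insert v (G.neighborSet v)

/-- A tree representation of `G`: a subtree `t v` of the host tree for every
vertex `v`, such that distinct vertices are adjacent iff their subtrees meet. -/
def IsTreeRep {α : Type*} (G : SimpleGraph α) (T : HostTree) (t : α → Set T.V) : Prop :=
  (∀ v : α, T.IsSubtree (t v)) ∧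
  ∀ u v : α, u ≠ v → (G.Adj u v ↔ (t u ∩ t v).Nonempty)

/-- A compatible tree representation: a tree representation all of whose
subtrees are pairwise compatible. -/
def IsCompatibleTreeRep {α : Type*} (G : SimpleGraph α) (T : HostTree)
    (t : α → Set T.V) : Prop :=
  IsTreeRep G T t ∧ ∀ u v : α, T.CompatiblePair (t u) (t v)

/-- A strong elimination order. -/
def IsStrongElimOrder {α : Type*} (G : SimpleGraph α) {n : ℕ} (σ : Fin n ≃ α) : Prop :=
  ∀ i j k l : Fin n, i < j → k < l →
    σ k ∈ closedNbhd G (σ i) → σ l ∈ closedNbhd G (σ i) →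
    σ k ∈ closedNbhd G (σ j) → σ l ∈ closedNbhd G (σ j)

/-!
In a rooted tree the ancestors of a node form a chain ordered by depth, and a subtree
contains every node between its root and any of its nodes. Hence of two intersecting
subtrees the one with the shallower root contains the deeper root; as `𝐯` is the deepest
root, it lies in `T(u)` for every `u ∈ N[v]`, in particular in `T(u₁) ∩ T(u₂)`. For
`w ∈ N[u₁]`, overshadowing then produces a node of `T(w) ∩ T(u₂)`.
-/

namespace HostTree

open SimpleGraph

variable (T : HostTree)

def IsAncestor (a x : T.V) : Prop :=
  a ∈ (T.rootPath x).support

/-- `T.depth x` is by definition `T.weight (T.rootPath x)`. -/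
noncomputable def weight {a b : T.V} (p : T.G.Walk a b) : ℝ :=
  (p.darts.map (fun d => T.w d.toProd.1 d.toProd.2)).sum

lemma weight_append {a b c : T.V} (p : T.G.Walk a b) (q : T.G.Walk b c) :
    T.weight (p.append q) = T.weight p + T.weight q := by
  simp [weight, Walk.darts_append]

lemma weight_nonneg {a b : T.V} (p : T.G.Walk a b) : 0 ≤ T.weight p :=
  List.sum_nonneg <| by
    simp only [List.mem_map]
    rintro _ ⟨d, -, rfl⟩
    exact (T.w_pos _ _ d.adj).le

lemma weight_pos {a b : T.V} (p : T.G.Walk a b) (hab : a ≠ b) : 0 < T.weight p := by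
  refine List.sum_pos _ ?_ ?_
  · simp only [List.mem_map]
    rintro _ ⟨d, -, rfl⟩
    exact T.w_pos _ _ d.adj
  · rw [Ne, List.map_eq_nil_iff, ← List.length_eq_zero_iff, Walk.length_darts]
    exact fun h => hab (Walk.eq_of_length_eq_zero h)

variable {T}

lemma rootPath_isPath (x : T.V) : (T.rootPath x).IsPath :=
  (T.isTree.existsUnique_path T.root x).choose_spec.1

lemma eq_of_isPath {a b : T.V} {p q : T.G.Walk a b} (hp : p.IsPath) (hq : q.IsPath) : p = q :=
  have := T.isTree.isAcyclic.subsingleton_path a b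
  congrArg Subtype.val (Subsingleton.elim (⟨p, hp⟩ : T.G.Path a b) ⟨q, hq⟩)

lemma eq_rootPath {x : T.V} {p : T.G.Walk T.root x} (hp : p.IsPath) : p = T.rootPath x :=
  eq_of_isPath hp (rootPath_isPath x)

lemma isAncestor_refl (x : T.V) : T.IsAncestor x x :=
  Walk.end_mem_support _

lemma IsAncestor.takeUntil_eq [DecidableEq T.V] {a x : T.V} (h : T.IsAncestor a x) :
    (T.rootPath x).takeUntil a h = T.rootPath a :=
  eq_rootPath ((rootPath_isPath x).takeUntil h)

lemma IsAncestor.depth_add_weight [DecidableEq T.V] {a x : T.V} (h : T.IsAncestor a x) :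
    T.depth a + T.weight ((T.rootPath x).dropUntil a h) = T.depth x := by
  calc T.depth a + T.weight ((T.rootPath x).dropUntil a h)
      = T.weight ((T.rootPath x).takeUntil a h) + T.weight ((T.rootPath x).dropUntil a h) := by
        rw [h.takeUntil_eq]; rfl
    _ = T.depth x := by rw [← weight_append, (T.rootPath x).take_spec h]; rfl

lemma IsAncestor.depth_le {a x : T.V} (h : T.IsAncestor a x) : T.depth a ≤ T.depth x := by
  classical
  linarith [h.depth_add_weight, T.weight_nonneg ((T.rootPath x).dropUntil a h)]

lemma IsAncestor.depth_lt {a x : T.V} (h : T.IsAncestor a x) (hne : a ≠ x) :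
    T.depth a < T.depth x := by
  classical
  linarith [h.depth_add_weight, T.weight_pos ((T.rootPath x).dropUntil a h) hne]

lemma rootPath_concat {x y : T.V} (hyx : T.G.Adj y x) (hx : ¬ T.IsAncestor x y) :
    T.rootPath x = (T.rootPath y).concat hyx :=
  (eq_rootPath ((rootPath_isPath y).concat hx hyx)).symm

/-- Of two adjacent nodes one is the parent of the other. -/
lemma IsAncestor.of_adj {m x y : T.V} (hxy : T.G.Adj x y) (hm : T.IsAncestor m y)
    (hmx : T.depth m ≤ T.depth x) : T.IsAncestor m x := by
  by_cases hx : T.IsAncestor x y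
  · have hy : ¬ T.IsAncestor y x := fun hy => (hx.depth_lt hxy.ne).not_ge hy.depth_le
    have hm' := hm
    rw [IsAncestor, rootPath_concat hxy hy, Walk.support_concat, List.mem_append,
      List.mem_singleton] at hm'
    rcases hm' with hm' | rfl
    · exact hm'
    · exact absurd hmx (hx.depth_lt hxy.ne).not_ge
  · rw [IsAncestor, rootPath_concat hxy.symm hx, Walk.support_concat]
    exact List.mem_append_left _ hm

lemma IsAncestor.of_walk {m a b : T.V} (W : T.G.Walk a b) (hm : T.IsAncestor m a)
    (hmin : ∀ z ∈ W.support, T.depth m ≤ T.depth z) : T.IsAncestor m b := by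
  induction W with
  | nil => exact hm
  | cons hadj p ih =>
    simp only [Walk.support_cons, List.forall_mem_cons] at hmin
    exact ih (hm.of_adj hadj.symm (hmin.2 _ p.start_mem_support)) hmin.2

lemma isAncestor_of_mem_support_of_forall_depth_le {m a b : T.V} (W : T.G.Walk a b)
    (hm : m ∈ W.support) (hmin : ∀ z ∈ W.support, T.depth m ≤ T.depth z) :
    T.IsAncestor m b := by
  classical
  exact (isAncestor_refl m).of_walk (W.dropUntil m hm)
    fun z hz => hmin z (W.support_dropUntil_subset_support hm hz)

lemma exists_walk_support_subset {S : Set T.V} (hS : (T.G.induce S).Connected) {a b : T.V}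
    (ha : a ∈ S) (hb : b ∈ S) : ∃ W : T.G.Walk a b, ∀ z ∈ W.support, z ∈ S := by
  obtain ⟨W⟩ := hS ⟨a, ha⟩ ⟨b, hb⟩
  refine ⟨W.map (Embedding.induce S).toHom, fun z hz => ?_⟩
  replace hz : z ∈ (W.map (Embedding.induce S).toHom).support := hz
  obtain ⟨⟨z, hzS⟩, -, rfl⟩ := List.mem_map.1 (Walk.support_map _ _ ▸ hz)
  exact hzS

lemma support_subset_of_isPath {S : Set T.V} (hS : (T.G.induce S).Connected) {a b : T.V}
    (ha : a ∈ S) (hb : b ∈ S) {P : T.G.Walk a b} (hP : P.IsPath) : ∀ z ∈ P.support, z ∈ S := by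
  classical
  obtain ⟨W, hW⟩ := exists_walk_support_subset hS ha hb
  rw [eq_of_isPath hP W.bypass_isPath]
  exact fun z hz => hW z (W.support_bypass_subset_support hz)

lemma IsSubtreeRoot.isAncestor {S : Set T.V} (hS : (T.G.induce S).Connected) {m x : T.V}
    (hm : T.IsSubtreeRoot S m) (hx : x ∈ S) : T.IsAncestor m x := by
  obtain ⟨W, hW⟩ := exists_walk_support_subset hS hm.1 hx
  exact isAncestor_of_mem_support_of_forall_depth_le W W.start_mem_support
    fun z hz => hm.2 z (hW z hz)

lemma exists_isAncestor_depth_le {S : Set T.V} (hS : (T.G.induce S).Connected) {a b : T.V}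
    (ha : a ∈ S) (hb : b ∈ S) : ∃ z ∈ S, T.depth z ≤ T.depth a ∧ T.IsAncestor z b := by
  classical
  obtain ⟨W, hW⟩ := exists_walk_support_subset hS ha hb
  obtain ⟨z, hz, hmin⟩ := W.support.toFinset.exists_min_image T.depth ⟨a, by simp⟩
  simp only [List.mem_toFinset] at hz hmin
  exact ⟨z, hW z hz, hmin a W.start_mem_support,
    isAncestor_of_mem_support_of_forall_depth_le W hz hmin⟩

lemma mem_of_isAncestor {S : Set T.V} (hS : (T.G.induce S).Connected) {a b x : T.V}
    (ha : a ∈ S) (hx : x ∈ S) (hax : T.IsAncestor a x) (hbx : T.IsAncestor b x)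
    (hab : T.depth a ≤ T.depth b) : b ∈ S := by
  classical
  have hb := hbx
  rw [IsAncestor, ← (T.rootPath x).take_spec hax, Walk.mem_support_append_iff,
    hax.takeUntil_eq] at hb
  rcases hb with hba | hb
  · obtain rfl | hne := eq_or_ne b a
    · exact ha
    · exact absurd hab (IsAncestor.depth_lt hba hne).not_ge
  · exact support_subset_of_isPath hS ha hx ((rootPath_isPath x).dropUntil hax) b hb

lemma IsSubtreeRoot.mem_of_inter_nonempty {S S' : Set T.V} (hS : (T.G.induce S).Connected)
    (hS' : (T.G.induce S').Connected) {m m' : T.V} (hm : T.IsSubtreeRoot S m)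
    (hm' : T.IsSubtreeRoot S' m') (hSS' : (S ∩ S').Nonempty) (hd : T.depth m' ≤ T.depth m) :
    m ∈ S' := by
  obtain ⟨q, hq, hq'⟩ := hSS'
  exact mem_of_isAncestor hS' hm'.1 hq' (hm'.isAncestor hS' hq') (hm.isAncestor hS hq) hd

lemma Overshadows.mem_of_depth_le {S₁ S₂ : Set T.V} (hov : T.Overshadows S₂ S₁) {x y : T.V}
    (hx : x ∈ S₁) (hy : y ∈ S₁ ∩ S₂) (hxy : T.depth x ≤ T.depth y) : x ∈ S₂ := by
  by_contra hx₂
  exact (hov x ⟨hx, hx₂⟩ y hy).not_ge hxy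

/-- The shallowest node `z` of a walk in `S₁` from `r` to `p ∈ S₁ ∩ S` and the root `m`
of `S` are both ancestors of `p`; the deeper of the two lies in `S₁ ∩ S`, and it is not
deeper than `r`, so overshadowing puts it in `S₂`. -/
lemma Overshadows.inter_nonempty {S₁ S₂ S : Set T.V} (hov : T.Overshadows S₂ S₁)
    (hS₁ : (T.G.induce S₁).Connected) (hS : (T.G.induce S).Connected) {r m : T.V}
    (hr : r ∈ S₁ ∩ S₂) (hm : T.IsSubtreeRoot S m) (hmr : T.depth m ≤ T.depth r)
    (hS₁S : (S₁ ∩ S).Nonempty) : (S₂ ∩ S).Nonempty := by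
  obtain ⟨p, hp₁, hp⟩ := hS₁S
  obtain ⟨z, hz₁, hzr, hzp⟩ := exists_isAncestor_depth_le hS₁ hr.1 hp₁
  have hz₂ : z ∈ S₂ := hov.mem_of_depth_le hz₁ hr hzr
  have hmp : T.IsAncestor m p := hm.isAncestor hS hp
  rcases le_total (T.depth m) (T.depth z) with hmz | hzm
  · exact ⟨z, hz₂, mem_of_isAncestor hS hm.1 hp hmp hzp hmz⟩
  · have hm₁ : m ∈ S₁ := mem_of_isAncestor hS₁ hz₁ hp₁ hzp hmp hzm
    exact ⟨m, hov.mem_of_depth_le hm₁ hr hmr, hm.1⟩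

end HostTree

lemma IsTreeRep.mem_closedNbhd_iff {α : Type*} {G : SimpleGraph α} {T : HostTree}
    {t : α → Set T.V} (h : IsTreeRep G T t) {u w : α} :
    w ∈ closedNbhd G u ↔ (t u ∩ t w).Nonempty := by
  obtain rfl | hwu := eq_or_ne w u
  · simpa [closedNbhd] using (h.1 w).1
  · rw [closedNbhd, Set.mem_insert_iff, or_iff_right hwu, SimpleGraph.mem_neighborSet]
    exact h.2 u w hwu.symm

theorem deepest_root_nbhd_subset_general {α : Type} (G : SimpleGraph α)
    (T : HostTree) (t : α → Set T.V) (h : IsTreeRep G T t)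
    (rt : α → T.V) (hrt : ∀ u : α, T.IsSubtreeRoot (t u) (rt u))
    (v : α) (hmax : ∀ u : α, T.depth (rt u) ≤ T.depth (rt v))
    (u₁ u₂ : α) (h1 : u₁ ∈ closedNbhd G v) (h2 : u₂ ∈ closedNbhd G v)
    (hov : T.Overshadows (t u₂) (t u₁)) :
    closedNbhd G u₁ ⊆ closedNbhd G u₂ := by
  have hroot : ∀ u ∈ closedNbhd G v, rt v ∈ t u := fun u hu =>
    (hrt v).mem_of_inter_nonempty (h.1 v).2 (h.1 u).2 (hrt u) (h.mem_closedNbhd_iff.1 hu) (hmax u)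
  intro w hw
  rw [h.mem_closedNbhd_iff] at hw ⊢
  exact hov.inter_nonempty (h.1 u₁).2 (h.1 w).2 ⟨hroot u₁ h1, hroot u₂ h2⟩ (hrt w) (hmax w) hw

/-- In a tree representation, if `v` maximizes the depth of its subtree root,
`u₁, u₂ ∈ N[v]`, and `T(u₂)` overshadows `T(u₁)`, then `N[u₁] ⊆ N[u₂]`. -/
theorem deepest_root_nbhd_subset {α : Type} [Fintype α] (G : SimpleGraph α)
    (T : HostTree) (t : α → Set T.V) (h : IsTreeRep G T t)
    (rt : α → T.V) (hrt : ∀ u : α, T.IsSubtreeRoot (t u) (rt u))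
    (v : α) (hmax : ∀ u : α, T.depth (rt u) ≤ T.depth (rt v))
    (u₁ u₂ : α) (h1 : u₁ ∈ closedNbhd G v) (h2 : u₂ ∈ closedNbhd G v)
    (hov : T.Overshadows (t u₂) (t u₁)) :
    closedNbhd G u₁ ⊆ closedNbhd G u₂ :=
  deepest_root_nbhd_subset_general G T t h rt hrt v hmax u₁ u₂ h1 h2 hov
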